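/- arXiv:1705.01033 — 2 statements merged into one kernel-verified Lean document; each statement's English description precedes it below -/
import Mathlib

section
/- Let D be a PVMD (Prüfer v-multiplication domain). Then D is completely integrally closed if and only if ⋂_{n≥1}(I^n)_v = (0) for every proper t-invertible integral t-ideal I of D. -/
open scoped nonZeroDivisors

variable (D : Type*) [CommRing D] [IsDomain D]
variable (K : Type*) [Field K] [Algebra D K] [IsFractionRing D K]

/-- `D` is completely integrally closed (w.r.t. a quotient field `K`). -/
def IsCompletelyIntegrallyClosed : Prop :=
  ∀ x : K,
    (∃ r : D, r ≠ 0 ∧ ∀ n : ℕ, 1 ≤ n →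
      ∃ d : D, algebraMap D K d = algebraMap D K r * x ^ n) →
    ∃ d : D, algebraMap D K d = x

/-- The `v`-operation: `I_v = (I⁻¹)⁻¹`, viewed as a `D`-submodule of `K`. -/
noncomputable def vSub (I : FractionalIdeal D⁰ K) : Submodule D K :=
  (((I⁻¹)⁻¹ : FractionalIdeal D⁰ K) : Submodule D K)

/-- The `t`-operation: `I_t = ⋃ {J_v : J ⊆ I nonzero finitely generated}`. -/
noncomputable def tSub (I : FractionalIdeal D⁰ K) : Submodule D K :=
  ⨆ J : {J : FractionalIdeal D⁰ K // J ≠ 0 ∧ (J : Submodule D K).FG ∧ J ≤ I}, vSub D K J.1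

/-- A fractional ideal `I` is `t`-invertible if `(I * I⁻¹)_t = D`. -/
noncomputable def IsTInvertible (I : FractionalIdeal D⁰ K) : Prop :=
  tSub D K (I * I⁻¹) = ((1 : FractionalIdeal D⁰ K) : Submodule D K)

/-- An integral ideal `I` of `D` is a `t`-ideal if `I_t = I`. -/
noncomputable def IsTIdeal (I : Ideal D) : Prop :=
  tSub D K (I : FractionalIdeal D⁰ K) = ((I : FractionalIdeal D⁰ K) : Submodule D K)

/-- `D` is a PVMD: every nonzero finitely generated integral ideal is `t`-invertible. -/
noncomputable def IsPVMD : Prop :=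
  ∀ I : Ideal D, I ≠ ⊥ → I.FG → IsTInvertible D K (I : FractionalIdeal D⁰ K)

/-!
Forward direction: if `I` is a proper integral `t`-ideal with `(I I⁻¹)_t = D`, then `I⁻¹ ⊄ D`
(otherwise `D = (I I⁻¹)_t ⊆ I_t = I`). For `u ∈ I⁻¹ \ D` and `0 ≠ d ∈ ⋂ (Iⁿ)_v` we get
`d uⁿ ∈ (Iⁿ)_v (Iⁿ)⁻¹ ⊆ D` for all `n`, so `u` is almost integral but not in `D`.

Converse: let `x ∉ D` with `r xⁿ ∈ D` for all `n`, and `B = D + D x`. Up to a principal factor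
`B` is a two-generated integral ideal, so it is `t`-invertible in a PVMD, and then so is the
divisorial ideal `C = B⁻¹ ⊆ D`; it is a proper `t`-ideal because `x ∉ D = C⁻¹`. Since
`(B C)_v = D`, also `(Bⁿ Cⁿ)_v = D`, whence `(Bⁿ)⁻¹ ⊆ (Cⁿ)_v`; and `r ∈ (Bⁿ)⁻¹` because
`r Bⁿ` is spanned by the elements `r xᵏ ∈ D`. Hence `0 ≠ r ∈ ⋂ (Cⁿ)_v`.
-/

open FractionalIdeal

namespace FractionalIdeal

variable {D K}

instance : NoZeroDivisors (FractionalIdeal D⁰ K) where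
  eq_zero_or_eq_zero_of_mul_eq_zero {I J} h := by
    refine or_iff_not_imp_left.mpr fun hI => eq_zero_iff.mpr fun y hy => ?_
    obtain ⟨x, hx, hx0⟩ : ∃ x ∈ I, x ≠ 0 := by simpa [eq_zero_iff] using hI
    have hxy : x * y = 0 := (mem_zero_iff D⁰).mp (h ▸ mul_mem_mul hx hy)
    exact (mul_eq_zero.mp hxy).resolve_left hx0

theorem inv_ne_zero_of_ne_zero {I : FractionalIdeal D⁰ K} (hI : I ≠ 0) : I⁻¹ ≠ 0 :=
  right_ne_zero_of_mul (bot_lt_mul_inv hI).ne'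

theorem inv_mul_self_le_one (I : FractionalIdeal D⁰ K) : I⁻¹ * I ≤ 1 :=
  mul_comm I I⁻¹ ▸ mul_one_div_le_one

theorem le_inv_iff_mul_le_one {I J : FractionalIdeal D⁰ K} (hJ : J ≠ 0) :
    I ≤ J⁻¹ ↔ I * J ≤ 1 :=
  le_div_iff_mul_le hJ

theorem le_inv_inv (I : FractionalIdeal D⁰ K) : I ≤ I⁻¹⁻¹ := by
  rcases eq_or_ne I 0 with rfl | hI
  · exact zero_le _
  · rw [le_inv_iff_mul_le_one (inv_ne_zero_of_ne_zero hI), mul_comm]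
    exact inv_mul_self_le_one I

theorem inv_inv_mono {I J : FractionalIdeal D⁰ K} (hIJ : I ≤ J) : I⁻¹⁻¹ ≤ J⁻¹⁻¹ := by
  rcases eq_or_ne I 0 with rfl | hI
  · simp [inv_zero']
  have hJ : J ≠ 0 := ne_bot_of_le_ne_bot hI hIJ
  exact inv_anti_mono (inv_ne_zero_of_ne_zero hJ) (inv_ne_zero_of_ne_zero hI)
    (inv_anti_mono hI hJ hIJ)

theorem inv_inv_inv (I : FractionalIdeal D⁰ K) : I⁻¹⁻¹⁻¹ = I⁻¹ := by
  rcases eq_or_ne I 0 with rfl | hI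
  · simp only [inv_zero']
  refine le_antisymm ?_ (le_inv_inv I⁻¹)
  exact inv_anti_mono hI (inv_ne_zero_of_ne_zero (inv_ne_zero_of_ne_zero hI)) (le_inv_inv I)

theorem inv_inv_le_one {I : FractionalIdeal D⁰ K} (hI : I ≤ 1) : I⁻¹⁻¹ ≤ 1 := by
  simpa only [inv_one] using inv_inv_mono hI

theorem inv_mul_inv_le_inv_mul (I J : FractionalIdeal D⁰ K) : I⁻¹ * J⁻¹ ≤ (I * J)⁻¹ := by
  rcases eq_or_ne (I * J) 0 with hIJ | hIJ
  · rcases mul_eq_zero.mp hIJ with rfl | rfl <;> simp [inv_zero']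
  rw [le_inv_iff_mul_le_one hIJ, mul_mul_mul_comm]
  calc I⁻¹ * I * (J⁻¹ * J) ≤ 1 * 1 := mul_le_mul' (inv_mul_self_le_one I) (inv_mul_self_le_one J)
    _ = 1 := one_mul 1

theorem mul_inv_inv_le_one {I J : FractionalIdeal D⁰ K} (h : I * J ≤ 1) : I * J⁻¹⁻¹ ≤ 1 := by
  rcases eq_or_ne J 0 with rfl | hJ
  · simp [inv_zero']
  calc I * J⁻¹⁻¹ ≤ J⁻¹ * J⁻¹⁻¹ := mul_le_mul_left (by rwa [le_inv_iff_mul_le_one hJ]) _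
    _ ≤ 1 := mul_one_div_le_one

theorem inv_pow_le_inv_pow (I : FractionalIdeal D⁰ K) (n : ℕ) : I⁻¹ ^ n ≤ (I ^ n)⁻¹ := by
  induction n with
  | zero => simp only [pow_zero, inv_one, le_refl]
  | succ n ih =>
    calc I⁻¹ ^ (n + 1) = I⁻¹ ^ n * I⁻¹ := pow_succ _ n
      _ ≤ (I ^ n)⁻¹ * I⁻¹ := mul_le_mul_left ih _
      _ ≤ (I ^ (n + 1))⁻¹ := pow_succ I n ▸ inv_mul_inv_le_inv_mul _ _

theorem inv_inv_mul_inv_inv_le (I J : FractionalIdeal D⁰ K) :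
    I⁻¹⁻¹ * J⁻¹⁻¹ ≤ (I * J)⁻¹⁻¹ := by
  rcases eq_or_ne (I * J) 0 with hIJ | hIJ
  · rcases mul_eq_zero.mp hIJ with rfl | rfl <;> simp [inv_zero']
  have hI : (I * J)⁻¹ * J * I ≤ 1 := by
    rw [mul_assoc, mul_comm J]
    exact inv_mul_self_le_one (I * J)
  have hJ : (I * J)⁻¹ * I⁻¹⁻¹ * J ≤ 1 :=
    mul_right_comm (I * J)⁻¹ J I⁻¹⁻¹ ▸ mul_inv_inv_le_one hI
  rw [le_inv_iff_mul_le_one (inv_ne_zero_of_ne_zero hIJ), mul_comm, ← mul_assoc]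
  exact mul_inv_inv_le_one hJ

theorem inv_inv_pow_eq_one {J : FractionalIdeal D⁰ K} (hJ : J ≤ 1) (h : J⁻¹⁻¹ = 1) (n : ℕ) :
    (J ^ n)⁻¹⁻¹ = 1 := by
  induction n with
  | zero => simp only [pow_zero, inv_one]
  | succ n ih =>
    refine le_antisymm (inv_inv_le_one (pow_le_one' hJ (n + 1))) ?_
    calc (1 : FractionalIdeal D⁰ K) = (J ^ n)⁻¹⁻¹ * J⁻¹⁻¹ := by rw [ih, h, one_mul]
      _ ≤ (J ^ (n + 1))⁻¹⁻¹ := pow_succ J n ▸ inv_inv_mul_inv_inv_le _ _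

theorem inv_le_inv_inv_of_inv_inv_mul_eq_one {I J : FractionalIdeal D⁰ K}
    (h : (I * J)⁻¹⁻¹ = 1) : I⁻¹ ≤ J⁻¹⁻¹ := by
  rcases eq_or_ne J 0 with rfl | hJ
  · simp [inv_zero'] at h
  rw [le_inv_iff_mul_le_one (inv_ne_zero_of_ne_zero hJ)]
  calc I⁻¹ * J⁻¹ ≤ (I * J)⁻¹ := inv_mul_inv_le_inv_mul I J
    _ = 1 := by rw [← inv_inv_inv, h, inv_one]

section Localization

variable {R : Type*} [CommRing R] {S : Submonoid R} {P : Type*} [CommRing P] [Algebra R P]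
  [IsLocalization S P]

theorem spanSingleton_mul_one_add_spanSingleton_pow_le_one {r x : P}
    (h : ∀ k : ℕ, r * x ^ k ∈ (1 : FractionalIdeal S P)) (n : ℕ) :
    spanSingleton S r * (1 + spanSingleton S x) ^ n ≤ 1 := by
  induction n generalizing r with
  | zero => simpa [spanSingleton_le_iff_mem] using h 0
  | succ n ih =>
    rw [pow_succ', ← mul_assoc, mul_add, mul_one, spanSingleton_mul_spanSingleton, add_mul,
      ← sup_eq_add]
    refine sup_le (ih h) (ih (r := r * x) fun k => ?_)
    simpa only [mul_assoc, ← pow_succ'] using h (k + 1)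

end Localization

end FractionalIdeal

section TOperation

variable {D K}

theorem le_tSub (I : FractionalIdeal D⁰ K) : (I : Submodule D K) ≤ tSub D K I := by
  intro x hx
  rcases eq_or_ne x 0 with rfl | hx0
  · exact zero_mem _
  have hfg : ((spanSingleton D⁰ x : FractionalIdeal D⁰ K) : Submodule D K).FG := by
    rw [coe_spanSingleton]
    exact Submodule.fg_span_singleton x
  exact Submodule.mem_iSup_of_mem
    ⟨spanSingleton D⁰ x, spanSingleton_ne_zero_iff.mpr hx0, hfg, spanSingleton_le_iff_mem.mpr hx⟩
    (le_inv_inv _ (mem_spanSingleton_self D⁰ x))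

theorem tSub_le_vSub (I : FractionalIdeal D⁰ K) : tSub D K I ≤ vSub D K I :=
  iSup_le fun J => coe_le_coe.mpr (inv_inv_mono J.2.2.2)

theorem tSub_mono {I J : FractionalIdeal D⁰ K} (h : I ≤ J) : tSub D K I ≤ tSub D K J :=
  iSup_le fun I' => le_iSup_of_le ⟨I'.1, I'.2.1, I'.2.2.1, I'.2.2.2.trans h⟩ le_rfl

theorem tSub_le_one {I : FractionalIdeal D⁰ K} (h : I ≤ 1) :
    tSub D K I ≤ ((1 : FractionalIdeal D⁰ K) : Submodule D K) :=
  (tSub_le_vSub I).trans (coe_le_coe.mpr (inv_inv_le_one h))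

theorem isTIdeal_of_inv_inv_eq {I : Ideal D} (h : (I : FractionalIdeal D⁰ K)⁻¹⁻¹ = I) :
    IsTIdeal D K I :=
  le_antisymm ((tSub_le_vSub _).trans (coe_le_coe.mpr h.le)) (le_tSub _)

namespace IsTInvertible

variable {I : FractionalIdeal D⁰ K}

theorem of_mul_inv_le {J : FractionalIdeal D⁰ K} (hI : IsTInvertible D K I)
    (h : I * I⁻¹ ≤ J * J⁻¹) : IsTInvertible D K J :=
  le_antisymm (tSub_le_one mul_one_div_le_one) (hI ▸ tSub_mono h)

theorem of_spanSingleton_mul {c : K} (h : IsTInvertible D K (spanSingleton D⁰ c * I))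
    (hI : I ≠ 0) : IsTInvertible D K I := by
  have hc : spanSingleton D⁰ c * (spanSingleton D⁰ c * I)⁻¹ ≤ I⁻¹ := by
    rw [le_inv_iff_mul_le_one hI, mul_right_comm, mul_comm]
    exact inv_mul_self_le_one _
  refine h.of_mul_inv_le ?_
  calc spanSingleton D⁰ c * I * (spanSingleton D⁰ c * I)⁻¹
      = I * (spanSingleton D⁰ c * (spanSingleton D⁰ c * I)⁻¹) := by ring
    _ ≤ I * I⁻¹ := mul_le_mul_right hc I

theorem inv (hI : IsTInvertible D K I) : IsTInvertible D K I⁻¹ :=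
  hI.of_mul_inv_le (mul_comm I I⁻¹ ▸ mul_le_mul_right (le_inv_inv I) I⁻¹)

theorem inv_inv_mul_inv_eq_one (hI : IsTInvertible D K I) : (I * I⁻¹)⁻¹⁻¹ = 1 :=
  le_antisymm (inv_inv_le_one mul_one_div_le_one)
    (coe_le_coe.mp (hI.symm.le.trans (tSub_le_vSub _)))

theorem inv_pow_le_inv_inv_inv_pow (hI : IsTInvertible D K I) (n : ℕ) :
    (I ^ n)⁻¹ ≤ (I⁻¹ ^ n)⁻¹⁻¹ := by
  refine inv_le_inv_inv_of_inv_inv_mul_eq_one ?_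
  rw [← mul_pow]
  exact inv_inv_pow_eq_one mul_one_div_le_one hI.inv_inv_mul_inv_eq_one n

end IsTInvertible

theorem IsTIdeal.not_inv_le_one {I : Ideal D} (hI : IsTIdeal D K I)
    (hinv : IsTInvertible D K (I : FractionalIdeal D⁰ K)) (htop : I ≠ ⊤) :
    ¬ (I : FractionalIdeal D⁰ K)⁻¹ ≤ 1 := by
  intro h
  have h1 : ((1 : FractionalIdeal D⁰ K) : Submodule D K) ≤ (I : FractionalIdeal D⁰ K) :=
    calc _ = tSub D K (I * (I : FractionalIdeal D⁰ K)⁻¹) := hinv.symm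
      _ ≤ tSub D K I := tSub_mono (mul_le_of_le_one_right' h)
      _ = _ := hI
  exact htop (Ideal.one_eq_top (R := D) ▸
    coeIdeal_eq_one.mp (le_antisymm coeIdeal_le_one (coe_le_coe.mp h1)))

theorem IsCompletelyIntegrallyClosed.iInf_vSub_pow_eq_bot (hD : IsCompletelyIntegrallyClosed D K)
    {I : FractionalIdeal D⁰ K} (hI1 : I ≤ 1) (hI : ¬ I⁻¹ ≤ 1) :
    (⨅ (n : ℕ) (_ : 1 ≤ n), vSub D K (I ^ n)) = ⊥ := by
  obtain ⟨u, hu, huD⟩ := SetLike.not_le_iff_exists.mp hI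
  rw [eq_bot_iff]
  intro x hx
  have hxv : ∀ n, 1 ≤ n → x ∈ vSub D K (I ^ n) := by simpa [Submodule.mem_iInf] using hx
  obtain ⟨d, rfl⟩ := (mem_one_iff D⁰).mp (inv_inv_le_one hI1 (pow_one I ▸ hxv 1 le_rfl))
  rw [Submodule.mem_bot]
  by_contra hd
  refine huD ((mem_one_iff D⁰).mpr (hD u ⟨d, fun h => hd (by rw [h, map_zero]), fun n hn => ?_⟩))
  have hun : u ^ n ∈ I⁻¹ ^ n := by
    rw [← mem_coe, coe_pow]
    exact Submodule.pow_mem_pow _ hu n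
  exact (mem_one_iff D⁰).mp
    (inv_mul_self_le_one _ (mul_mem_mul (hxv n hn) (inv_pow_le_inv_pow I n hun)))

theorem IsPVMD.isTInvertible_one_add_spanSingleton (hD : IsPVMD D K) (x : K) :
    IsTInvertible D K (1 + spanSingleton D⁰ x) := by
  obtain ⟨a, b, hb, rfl⟩ := IsFractionRing.div_surjective (A := D) x
  have hb0 : algebraMap D K b ≠ 0 := IsFractionRing.to_map_ne_zero_of_mem_nonZeroDivisors hb
  have hspan : ((Ideal.span {b, a} : Ideal D) : FractionalIdeal D⁰ K) =
      spanSingleton D⁰ (algebraMap D K b) *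
        (1 + spanSingleton D⁰ (algebraMap D K a / algebraMap D K b)) := by
    rw [mul_add, mul_one, spanSingleton_mul_spanSingleton, mul_div_cancel₀ _ hb0,
      Ideal.span_insert, coeIdeal_sup, coeIdeal_span_singleton, coeIdeal_span_singleton]
  have hne : Ideal.span {b, a} ≠ ⊥ := by simp [nonZeroDivisors.ne_zero hb]
  have h := hD _ hne (Submodule.fg_span (Set.toFinite _))
  rw [hspan] at h
  exact h.of_spanSingleton_mul (ne_bot_of_le_ne_bot one_ne_zero le_self_add)

theorem IsPVMD.isCompletelyIntegrallyClosed (hD : IsPVMD D K)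
    (h : ∀ I : Ideal D, I ≠ ⊤ → IsTIdeal D K I → IsTInvertible D K (I : FractionalIdeal D⁰ K) →
      (⨅ (n : ℕ) (_ : 1 ≤ n), vSub D K ((I : FractionalIdeal D⁰ K) ^ n)) = ⊥) :
    IsCompletelyIntegrallyClosed D K := by
  rintro x ⟨r, hr, hrx⟩
  by_contra hx
  set B : FractionalIdeal D⁰ K := 1 + spanSingleton D⁰ x
  have hB1 : 1 ≤ B := le_self_add
  have hB0 : B ≠ 0 := ne_bot_of_le_ne_bot one_ne_zero hB1
  have hBinv : IsTInvertible D K B := hD.isTInvertible_one_add_spanSingleton x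
  have hC1 : B⁻¹ ≤ 1 := by
    simpa only [inv_one] using inv_anti_mono (I := (1 : FractionalIdeal D⁰ K)) one_ne_zero hB0 hB1
  obtain ⟨I, hI⟩ := le_one_iff_exists_coeIdeal.mp hC1
  have hItop : I ≠ ⊤ := by
    rintro rfl
    have hxB : x ∈ B⁻¹⁻¹ :=
      le_inv_inv B ((le_add_self : spanSingleton D⁰ x ≤ B) (mem_spanSingleton_self D⁰ x))
    rw [← hI, coeIdeal_top, inv_one] at hxB
    exact hx ((mem_one_iff D⁰).mp hxB)
  have hrB : ∀ n, algebraMap D K r ∈ (B ^ n)⁻¹ := fun n => by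
    rw [← spanSingleton_le_iff_mem, le_inv_iff_mul_le_one (pow_ne_zero n hB0)]
    refine spanSingleton_mul_one_add_spanSingleton_pow_le_one (fun k => ?_) n
    rcases k.eq_zero_or_pos with rfl | hk
    · simp
    · obtain ⟨d, hd⟩ := hrx k hk
      exact (mem_one_iff D⁰).mpr ⟨d, hd⟩
  have hbot := h I hItop (isTIdeal_of_inv_inv_eq (by rw [hI, inv_inv_inv]))
    (hI ▸ hBinv.inv)
  have hr0 : algebraMap D K r ∈ (⊥ : Submodule D K) := by
    simp only [← hbot, Submodule.mem_iInf]
    intro n _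
    rw [hI]
    exact hBinv.inv_pow_le_inv_inv_inv_pow n (hrB n)
  exact hr (by simpa using hr0)

end TOperation

/-- A PVMD `D` is completely integrally closed iff `⋂_{n ≥ 1} (I^n)_v = (0)` for
every proper `t`-invertible integral `t`-ideal `I` of `D`. -/
theorem stmt_7 (hD : IsPVMD D K) :
    IsCompletelyIntegrallyClosed D K ↔
      ∀ I : Ideal D, I ≠ ⊤ → IsTIdeal D K I → IsTInvertible D K (I : FractionalIdeal D⁰ K) →
        (⨅ (n : ℕ) (_ : 1 ≤ n), vSub D K ((I : FractionalIdeal D⁰ K) ^ n)) = ⊥ :=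
  ⟨fun hCIC _ htop hI hinv =>
    hCIC.iInf_vSub_pow_eq_bot coeIdeal_le_one (hI.not_inv_le_one hinv htop),
    hD.isCompletelyIntegrallyClosed⟩
end

section
/- Let D be a completely integrally closed domain and let I be a nonzero ideal of D with I_v ≠ D. Then there exist a, b ∈ D with (b) ⊄ (a) such that I ⊆ (a/b)D as fractional ideals, and consequently (I^n)_v ⊆ (a/b)^n D for every n ≥ 1. -/
/-!
Since `I ⊆ D` and `I_v ≠ D`, also `I⁻¹ ≠ D`, so `I⁻¹` contains some `u = b/a` outside `D`, i.e. with
`a ∤ b`. From `u I ⊆ D` we get `I ⊆ (a/b)D`, hence `I^n ⊆ (a/b)^n D`, and the `v`-operation preserves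
inclusions and fixes principal fractional ideals.
-/

open scoped nonZeroDivisors

variable (D : Type*) [CommRing D] [IsDomain D]
variable (K : Type*) [Field K] [Algebra D K] [IsFractionRing D K]

namespace FractionalIdeal

theorem div_mem_one_of_span_singleton_le {R P : Type*} [CommRing R] [Field P] [Algebra R P]
    {S : Submonoid R} {a b : R} (h : Ideal.span {b} ≤ Ideal.span {a}) :
    algebraMap R P b / algebraMap R P a ∈ (1 : FractionalIdeal S P) := by
  obtain ⟨t, rfl⟩ := Ideal.span_singleton_le_span_singleton.mp h
  rw [mem_one_iff]
  by_cases ha : algebraMap R P a = 0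
  · exact ⟨0, by simp [ha]⟩
  · exact ⟨t, by rw [map_mul, mul_div_cancel_left₀ _ ha]⟩

theorem pow_le_spanSingleton_pow {R P : Type*} [CommRing R] [CommRing P] [Algebra R P]
    {S : Submonoid R} [IsLocalization S P] {I : FractionalIdeal S P} {x : P}
    (h : I ≤ spanSingleton S x) (n : ℕ) :
    I ^ n ≤ spanSingleton S (x ^ n) := by
  rw [← spanSingleton_pow]
  exact pow_le_pow_left' h n

variable {R K : Type*} [CommRing R] [IsDomain R] [Field K] [Algebra R K] [IsFractionRing R K]

theorem le_spanSingleton_inv_of_mem_inv {I : FractionalIdeal R⁰ K} {u : K} (hu0 : u ≠ 0)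
    (hu : u ∈ I⁻¹) : I ≤ spanSingleton R⁰ u⁻¹ := by
  have hI : I ≠ 0 := by
    rintro rfl
    exact hu0 (by simpa [inv_zero'] using hu)
  intro x hx
  obtain ⟨t, ht⟩ := (mem_one_iff _).mp ((mem_inv_iff hI).mp hu x hx)
  refine (mem_spanSingleton _).mpr ⟨t, ?_⟩
  rw [Algebra.smul_def, ht, mul_comm u x, mul_inv_cancel_right₀ hu0]

theorem inv_inv_le_spanSingleton {J : FractionalIdeal R⁰ K} {x : K}
    (h : J ≤ spanSingleton R⁰ x) : J⁻¹⁻¹ ≤ spanSingleton R⁰ x := by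
  rcases eq_or_ne J 0 with rfl | hJ
  · simp [inv_zero']
  have hx : x ≠ 0 := by
    rintro rfl
    exact hJ (le_bot_iff.mp (by simpa using h))
  have hinv : spanSingleton R⁰ x⁻¹ ≤ J⁻¹ := by
    simpa using inv_anti_mono hJ (spanSingleton_ne_zero_iff.mpr hx) h
  have hinv0 : spanSingleton R⁰ x⁻¹ ≠ 0 := spanSingleton_ne_zero_iff.mpr (inv_ne_zero hx)
  simpa using inv_anti_mono hinv0 (ne_bot_of_le_ne_bot hinv0 hinv) hinv

theorem exists_mem_inv_notMem_one_of_inv_inv_ne_one {I : FractionalIdeal R⁰ K} (hI1 : I ≤ 1)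
    (hI0 : I ≠ 0) (hIv : I⁻¹⁻¹ ≠ 1) : ∃ u ∈ I⁻¹, u ∉ (1 : FractionalIdeal R⁰ K) := by
  have hone : 1 ≤ I⁻¹ := by simpa using inv_anti_mono hI0 one_ne_zero hI1
  refine SetLike.not_le_iff_exists.mp fun hle => hIv ?_
  rw [le_antisymm hle hone, inv_one]

end FractionalIdeal

open FractionalIdeal

theorem stmt_19
    (I : Ideal D) (hI0 : I ≠ ⊥)
    (hIv : (((I : FractionalIdeal D⁰ K)⁻¹)⁻¹ : FractionalIdeal D⁰ K) ≠ 1) :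
    ∃ a b : D, ¬ Ideal.span {b} ≤ Ideal.span {a} ∧
      ((I : FractionalIdeal D⁰ K) : Submodule D K) ≤
        Submodule.span D {algebraMap D K a / algebraMap D K b} ∧
      ∀ n : ℕ, 1 ≤ n →
        ((((((I : FractionalIdeal D⁰ K) ^ n)⁻¹)⁻¹ : FractionalIdeal D⁰ K)) : Submodule D K) ≤
          Submodule.span D {(algebraMap D K a / algebraMap D K b) ^ n} := by
  obtain ⟨u, huI, hu1⟩ := exists_mem_inv_notMem_one_of_inv_inv_ne_one coeIdeal_le_one
    (coeIdeal_ne_zero.mpr hI0) hIv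
  have hu0 : u ≠ 0 := fun h => hu1 (h ▸ zero_mem _)
  obtain ⟨b, a, -, rfl⟩ := IsFractionRing.div_surjective (A := D) u
  have hIab : (I : FractionalIdeal D⁰ K) ≤
      spanSingleton D⁰ (algebraMap D K a / algebraMap D K b) := by
    simpa using le_spanSingleton_inv_of_mem_inv hu0 huI
  refine ⟨a, b, fun h => hu1 (div_mem_one_of_span_singleton_le h), ?_, fun n _ => ?_⟩
  · simpa using coe_le_coe.mpr hIab
  · simpa using coe_le_coe.mpr (inv_inv_le_spanSingleton (pow_le_spanSingleton_pow hIab n))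
end
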